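/- arXiv:0705.3632 — 4 statements merged into one kernel-verified Lean document; each statement's English description precedes it below -/
import Mathlib

section
/- Over a field K of positive characteristic p, the p-fold shuffle power of any formal power series A = Σₙ αₙXⁿ ∈ K[[X]] equals the constant α₀^p. -/
open PowerSeries

/-- The shuffle product of two formal power series in one variable:
`A ⧢ B = Σ_{n,m} C(n+m,n) αₙ βₘ X^{n+m}`. -/
noncomputable def shuffle {K : Type*} [Field K] (A B : PowerSeries K) : PowerSeries K :=
  PowerSeries.mk fun n =>
    ∑ p ∈ Finset.HasAntidiagonal.antidiagonal n,
      (n.choose p.1 : K) * (PowerSeries.coeff p.1 A) * (PowerSeries.coeff p.2 B)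
/-- `shufflePow A n` is the `n`-fold shuffle power `A^{⧢n}`. -/
noncomputable def shufflePow {K : Type*} [Field K] (A : PowerSeries K) : ℕ → PowerSeries K
  | 0 => 1
  | n + 1 => shuffle A (shufflePow A n)

namespace ShuffleAux

open Finset

variable {K : Type*} [Field K]

lemma coeff_shuffle (A B : PowerSeries K) (n : ℕ) :
    PowerSeries.coeff n (shuffle A B) =
      ∑ p ∈ Finset.HasAntidiagonal.antidiagonal n,
        (n.choose p.1 : K) * (PowerSeries.coeff p.1 A) * (PowerSeries.coeff p.2 B) := by
  simp [shuffle, PowerSeries.coeff_mk]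

/-- The shift operator: a derivation for the shuffle product. -/
noncomputable def D (A : PowerSeries K) : PowerSeries K :=
  PowerSeries.mk fun n => PowerSeries.coeff (n + 1) A

lemma coeff_D (A : PowerSeries K) (n : ℕ) :
    PowerSeries.coeff n (D A) = PowerSeries.coeff (n + 1) A :=
  PowerSeries.coeff_mk _ _

lemma D_one : D (1 : PowerSeries K) = 0 := by
  ext n
  simp [coeff_D, PowerSeries.coeff_one]

lemma shuffle_zero_right (A : PowerSeries K) : shuffle A 0 = 0 := by
  ext n; simp [coeff_shuffle]

lemma shuffle_one (A : PowerSeries K) : shuffle A 1 = A := by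
  ext n
  rw [coeff_shuffle, Finset.sum_eq_single (n, 0)]
  · simp
  · rintro ⟨i, j⟩ hmem hne
    rw [Finset.HasAntidiagonal.mem_antidiagonal] at hmem
    have hj : j ≠ 0 := by rintro rfl; exact hne (by simp [← hmem])
    simp [PowerSeries.coeff_one, hj]
  · intro h
    exact absurd (by simp [Finset.HasAntidiagonal.mem_antidiagonal]) h

lemma shuffle_smul (c : K) (A B : PowerSeries K) :
    shuffle A (c • B) = c • shuffle A B := by
  ext n
  simp only [coeff_shuffle, map_smul, smul_eq_mul, Finset.mul_sum]
  exact Finset.sum_congr rfl fun p _ => by ring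

lemma coeff_zero_shuffle (A B : PowerSeries K) :
    PowerSeries.coeff 0 (shuffle A B) =
      PowerSeries.coeff 0 A * PowerSeries.coeff 0 B := by
  simp [coeff_shuffle]

lemma tri (i j k : ℕ) : ((i+j+k).choose i) * ((j+k).choose j)
    = ((i+j+k).choose j) * ((i+k).choose i) := by
  have h1 : (i+j+k).choose i = (i+j+k).choose (j+k) := by
    rw [← Nat.choose_symm (by omega : j+k ≤ i+j+k)]; congr 1; omega
  rw [h1, Nat.choose_mul (Nat.le_add_right j k),
    show i+j+k-j = i+k from by omega, show j+k-j = k from by omega,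
    ← Nat.choose_symm (Nat.le_add_left k i), Nat.add_sub_cancel]

lemma D_shuffle (A B : PowerSeries K) :
    D (shuffle A B) = shuffle (D A) B + shuffle A (D B) := by
  ext n
  rw [map_add, coeff_D, coeff_shuffle, coeff_shuffle, coeff_shuffle,
    Finset.Nat.sum_antidiagonal_succ]
  simp only [coeff_D]
  have split : ∀ p ∈ Finset.HasAntidiagonal.antidiagonal n,
      (((n+1).choose (p.1+1) : K) * PowerSeries.coeff (p.1+1) A * PowerSeries.coeff p.2 B)
      = ((n.choose p.1 : K) * PowerSeries.coeff (p.1+1) A * PowerSeries.coeff p.2 B)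
        + ((n.choose (p.1+1) : K) * PowerSeries.coeff (p.1+1) A * PowerSeries.coeff p.2 B) := by
    intro p _
    rw [Nat.choose_succ_succ]
    push_cast
    ring
  rw [Finset.sum_congr rfl split, Finset.sum_add_distrib]
  have h2 := Finset.Nat.sum_antidiagonal_succ (n := n)
    (f := fun p => (n.choose p.1 : K) * PowerSeries.coeff p.1 A * PowerSeries.coeff p.2 B)
  have h3 := Finset.Nat.sum_antidiagonal_succ' (n := n)
    (f := fun p => (n.choose p.1 : K) * PowerSeries.coeff p.1 A * PowerSeries.coeff p.2 B)
  simp only [Nat.choose_zero_right, Nat.cast_one, one_mul, Nat.choose_succ_self,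
    Nat.cast_zero, zero_mul, zero_add] at h2 h3 ⊢
  linear_combination h3 - h2

lemma shuffle_left_comm (A B C : PowerSeries K) :
    shuffle A (shuffle B C) = shuffle B (shuffle A C) := by
  ext n
  rw [coeff_shuffle, coeff_shuffle]
  simp only [coeff_shuffle, Finset.mul_sum]
  rw [Finset.sum_sigma', Finset.sum_sigma']
  apply Finset.sum_nbij' (i := fun q => ⟨(q.2.1, q.1.1 + q.2.2), (q.1.1, q.2.2)⟩)
    (j := fun q => ⟨(q.2.1, q.1.1 + q.2.2), (q.1.1, q.2.2)⟩)
  · rintro ⟨⟨i, m⟩, ⟨j, k⟩⟩ hq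
    simp only [Finset.mem_sigma, Finset.HasAntidiagonal.mem_antidiagonal] at hq ⊢
    exact ⟨by omega, trivial⟩
  · rintro ⟨⟨i, m⟩, ⟨j, k⟩⟩ hq
    simp only [Finset.mem_sigma, Finset.HasAntidiagonal.mem_antidiagonal] at hq ⊢
    exact ⟨by omega, trivial⟩
  · rintro ⟨⟨i, m⟩, ⟨j, k⟩⟩ hq
    simp only [Finset.mem_sigma, Finset.HasAntidiagonal.mem_antidiagonal] at hq
    simp only [Sigma.mk.inj_iff, Prod.mk.injEq, heq_eq_eq]
    exact ⟨⟨trivial, by omega⟩, trivial⟩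
  · rintro ⟨⟨i, m⟩, ⟨j, k⟩⟩ hq
    simp only [Finset.mem_sigma, Finset.HasAntidiagonal.mem_antidiagonal] at hq
    simp only [Sigma.mk.inj_iff, Prod.mk.injEq, heq_eq_eq]
    exact ⟨⟨trivial, by omega⟩, trivial⟩
  · rintro ⟨⟨i, m⟩, ⟨j, k⟩⟩ hq
    simp only [Finset.mem_sigma, Finset.HasAntidiagonal.mem_antidiagonal] at hq
    obtain ⟨h1, h2⟩ := hq
    subst h2
    have h : (((i+(j+k)).choose i : ℕ) : K) * (((j+k).choose j : ℕ) : K)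
        = (((i+(j+k)).choose j : ℕ) : K) * (((i+k).choose i : ℕ) : K) := by
      have := tri i j k
      rw [add_assoc] at this
      exact_mod_cast congrArg (Nat.cast : ℕ → K) this
    subst h1
    linear_combination (PowerSeries.coeff i A * PowerSeries.coeff j B *
      PowerSeries.coeff k C) * h

lemma D_shufflePow (A : PowerSeries K) :
    ∀ k, D (shufflePow A (k+1)) = ((k+1 : ℕ) : K) • shuffle (D A) (shufflePow A k)
  | 0 => by
    show D (shuffle A (shufflePow A 0)) = _
    rw [show shufflePow A 0 = (1 : PowerSeries K) from rfl, D_shuffle, D_one,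
      shuffle_zero_right]
    simp
  | k + 1 => by
    show D (shuffle A (shufflePow A (k+1))) = _
    rw [D_shuffle, D_shufflePow A k, shuffle_smul, shuffle_left_comm,
      show shufflePow A (k+1) = shuffle A (shufflePow A k) from rfl,
      show (((k+1+1 : ℕ)) : K) = ((k+1 : ℕ) : K) + 1 from by push_cast; ring,
      add_smul, one_smul, add_comm]

lemma coeff_zero_shufflePow (A : PowerSeries K) :
    ∀ k, PowerSeries.coeff 0 (shufflePow A k) = (PowerSeries.coeff 0 A) ^ k
  | 0 => by simp [shufflePow]
  | k + 1 => by
    show PowerSeries.coeff 0 (shuffle A (shufflePow A k)) = _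
    rw [coeff_zero_shuffle, coeff_zero_shufflePow A k, pow_succ]
    ring

end ShuffleAux

/-- Over a field of characteristic `p > 0`, the `p`-fold shuffle power of any
formal power series `A` equals the constant `α₀^p`. -/
theorem shufflePow_char_p {K : Type*} [Field K] (p : ℕ) (hp : p.Prime) [CharP K p]
    (A : PowerSeries K) :
    shufflePow A p = PowerSeries.C ((PowerSeries.coeff 0 A) ^ p) := by
  obtain ⟨m, rfl⟩ : ∃ m, p = m + 1 := ⟨p - 1, (Nat.succ_pred_eq_of_pos hp.pos).symm⟩
  have hD : ShuffleAux.D (shufflePow A (m+1)) = 0 := by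
    rw [ShuffleAux.D_shufflePow, CharP.cast_eq_zero K (m+1), zero_smul]
  ext n
  cases n with
  | zero =>
    rw [ShuffleAux.coeff_zero_shufflePow, PowerSeries.coeff_zero_C]
  | succ n =>
    have h := congrArg (PowerSeries.coeff n) hD
    rw [ShuffleAux.coeff_D, map_zero] at h
    rw [h, PowerSeries.coeff_C, if_neg (Nat.succ_ne_zero n)]
end

section
/- Over the algebraic closure of F₂, the quadratic form σ defined by σ(Σ αₙXⁿ) = α₀² + Σ_{n≥0} α_{2ⁿ}² X^{2^{n+1}} + Σ_{0≤i<j} C(i+j,i) αᵢαⱼ X^{i+j} induces a bijection on the affine subspace 1 + X·K[[X]] for any subfield K ⊆ F̄₂. -/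
open PowerSeries
open scoped Classical

/-- The quadratic form
`σ(Σ αₙXⁿ) = α₀² + Σ_{n≥0} α_{2ⁿ}² X^{2^{n+1}} + Σ_{0≤i<j} C(i+j,i) αᵢαⱼ X^{i+j}`. -/
noncomputable def sigmaForm {K : Type*} [Field K] (A : PowerSeries K) : PowerSeries K :=
  PowerSeries.mk fun m =>
    (if m = 0 then (PowerSeries.coeff (R := K) 0 A) ^ 2 else 0) +
    (if ∃ n : ℕ, m = 2 ^ (n + 1) then (PowerSeries.coeff (R := K) (m / 2) A) ^ 2 else 0) +
    ∑ p ∈ Finset.HasAntidiagonal.antidiagonal m,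
      (if p.1 < p.2 then
        (m.choose p.1 : K) * PowerSeries.coeff (R := K) p.1 A * PowerSeries.coeff (R := K) p.2 A
      else 0)

section Aux

variable {K : Type*} [Field K]

lemma coeff_sigmaForm (A : PowerSeries K) (m : ℕ) :
    coeff (R := K) m (sigmaForm A) =
      (if m = 0 then (coeff (R := K) 0 A) ^ 2 else 0) +
      (if ∃ n : ℕ, m = 2 ^ (n + 1) then (coeff (R := K) (m / 2) A) ^ 2 else 0) +
      ∑ p ∈ Finset.HasAntidiagonal.antidiagonal m,
        (if p.1 < p.2 then (m.choose p.1 : K) * coeff (R := K) p.1 A * coeff (R := K) p.2 A else 0) := by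
  simp [sigmaForm]

lemma mem_lt_of_cross {n : ℕ} {p : ℕ × ℕ} (hp : p ∈ Finset.HasAntidiagonal.antidiagonal n)
    (h1 : 0 < p.1) (h2 : p.1 < p.2) : p.1 < n ∧ p.2 < n := by
  rw [Finset.HasAntidiagonal.mem_antidiagonal] at hp
  omega

lemma sum_split (n : ℕ) (hn : 0 < n) (α : ℕ → K) (h0 : α 0 = 1) :
    ∑ p ∈ Finset.HasAntidiagonal.antidiagonal n,
        (if p.1 < p.2 then (n.choose p.1 : K) * α p.1 * α p.2 else 0)
      = α n + ∑ p ∈ Finset.HasAntidiagonal.antidiagonal n,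
        (if 0 < p.1 ∧ p.1 < p.2 then (n.choose p.1 : K) * α p.1 * α p.2 else 0) := by
  have key : ∀ p ∈ Finset.HasAntidiagonal.antidiagonal n,
      (if p.1 < p.2 then (n.choose p.1 : K) * α p.1 * α p.2 else 0)
      = (if p.1 = 0 ∧ p.1 < p.2 then (n.choose p.1 : K) * α p.1 * α p.2 else 0)
      + (if 0 < p.1 ∧ p.1 < p.2 then (n.choose p.1 : K) * α p.1 * α p.2 else 0) := by
    intro p _
    by_cases h2 : p.1 < p.2
    · rcases Nat.eq_zero_or_pos p.1 with h | h
      · simp [h, h2]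
      · simp [h2, h, h.ne']
    · simp [h2]
  rw [Finset.sum_congr rfl key, Finset.sum_add_distrib]
  congr 1
  rw [Finset.sum_eq_single ((0 : ℕ), n)]
  · simp [hn, h0]
  · intro p hp hne
    rw [Finset.HasAntidiagonal.mem_antidiagonal] at hp
    have : ¬(p.1 = 0 ∧ p.1 < p.2) := by
      rintro ⟨h1, h2⟩
      apply hne
      have : p.2 = n := by omega
      exact Prod.ext h1 this
    simp [this]
  · simp [hn]

/-- Coefficient formula for `sigmaForm` in positive degree, with first coefficient 1. -/
lemma coeff_sigmaForm_pos (A : PowerSeries K) (hA : coeff (R := K) 0 A = 1) (n : ℕ) (hn : 0 < n) :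
    coeff (R := K) n (sigmaForm A) =
      coeff (R := K) n A +
      ((if ∃ k : ℕ, n = 2 ^ (k + 1) then (coeff (R := K) (n / 2) A) ^ 2 else 0) +
      ∑ p ∈ Finset.HasAntidiagonal.antidiagonal n,
        (if 0 < p.1 ∧ p.1 < p.2 then (n.choose p.1 : K) * coeff (R := K) p.1 A * coeff (R := K) p.2 A
          else 0)) := by
  have hs := sum_split n hn (fun m => coeff (R := K) m A) hA
  rw [coeff_sigmaForm, if_neg hn.ne', hs]
  ring

lemma coeff_zero_sigmaForm (A : PowerSeries K) :
    coeff (R := K) 0 (sigmaForm A) = (coeff (R := K) 0 A) ^ 2 := by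
  rw [coeff_sigmaForm]
  have h1 : ¬ ∃ n : ℕ, 0 = 2 ^ (n + 1) := by
    rintro ⟨n, hn⟩
    exact (pow_ne_zero _ two_ne_zero) hn.symm
  simp [h1]

/-- The "solve for next coefficient" function. -/
noncomputable def solF (c : ℕ → K) (n : ℕ) (α : ℕ → K) : K :=
  if n = 0 then 1 else
    c n - (if ∃ k : ℕ, n = 2 ^ (k + 1) then (α (n / 2)) ^ 2 else 0)
        - ∑ p ∈ Finset.HasAntidiagonal.antidiagonal n,
            (if 0 < p.1 ∧ p.1 < p.2 then (n.choose p.1 : K) * α p.1 * α p.2 else 0)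

lemma solF_congr (c : ℕ → K) (n : ℕ) (α β : ℕ → K) (h : ∀ m < n, α m = β m) :
    solF c n α = solF c n β := by
  rcases Nat.eq_zero_or_pos n with hn | hn
  · simp [solF, hn]
  rw [solF, solF, if_neg hn.ne', if_neg hn.ne']
  congr 1
  · congr 1
    by_cases he : ∃ k : ℕ, n = 2 ^ (k + 1)
    · rw [if_pos he, if_pos he, h _ (Nat.div_lt_self hn one_lt_two)]
    · rw [if_neg he, if_neg he]
  · apply Finset.sum_congr rfl
    intro p hp
    by_cases hc : 0 < p.1 ∧ p.1 < p.2
    · obtain ⟨l1, l2⟩ := mem_lt_of_cross hp hc.1 hc.2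
      rw [if_pos hc, if_pos hc, h _ l1, h _ l2]
    · rw [if_neg hc, if_neg hc]

noncomputable def sol (c : ℕ → K) : ℕ → K :=
  Nat.lt_wfRel.wf.fix fun n ih => solF c n fun m => if h : m < n then ih m h else 0

lemma sol_eq (c : ℕ → K) (n : ℕ) :
    sol c n = solF c n fun m => if m < n then sol c m else 0 := by
  rw [sol, WellFounded.fix_eq]
  rfl

lemma sol_zero (c : ℕ → K) : sol c 0 = 1 := by
  rw [sol_eq]; simp [solF]

lemma sol_eq' (c : ℕ → K) (n : ℕ) : sol c n = solF c n (sol c) := by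
  rw [sol_eq]
  exact solF_congr _ _ _ _ fun m hm => if_pos hm

end Aux

/-- For any subfield `K` of the algebraic closure of `𝔽₂`, the quadratic form `σ`
induces a bijection on the affine subspace `1 + X·K[[X]]`. -/
theorem sigmaForm_bijOn (K : Subfield (AlgebraicClosure (ZMod 2))) :
    Set.BijOn (sigmaForm (K := K))
      {A : PowerSeries K | PowerSeries.coeff (R := K) 0 A = 1}
      {A : PowerSeries K | PowerSeries.coeff (R := K) 0 A = 1} := by
  refine ⟨?_, ?_, ?_⟩
  · -- maps to
    intro A hA
    simp only [Set.mem_setOf_eq] at hA ⊢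
    rw [coeff_zero_sigmaForm, hA, one_pow]
  · -- injective
    intro A hA B hB hAB
    simp only [Set.mem_setOf_eq] at hA hB
    refine PowerSeries.ext fun n => ?_
    induction n using Nat.strong_induction_on with
    | _ n ih =>
      rcases Nat.eq_zero_or_pos n with hn | hn
      · rw [hn, hA, hB]
      · have h1 := coeff_sigmaForm_pos A hA n hn
        have h2 := coeff_sigmaForm_pos B hB n hn
        rw [hAB] at h1
        have hsq : (if ∃ k : ℕ, n = 2 ^ (k + 1) then (coeff (R := K) (n / 2) A) ^ 2 else 0)
            = (if ∃ k : ℕ, n = 2 ^ (k + 1) then (coeff (R := K) (n / 2) B) ^ 2 else 0) := by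
          by_cases he : ∃ k : ℕ, n = 2 ^ (k + 1)
          · rw [if_pos he, if_pos he, ih _ (Nat.div_lt_self hn one_lt_two)]
          · rw [if_neg he, if_neg he]
        have hsum : ∑ p ∈ Finset.HasAntidiagonal.antidiagonal n,
              (if 0 < p.1 ∧ p.1 < p.2 then
                (n.choose p.1 : K) * coeff (R := K) p.1 A * coeff (R := K) p.2 A else 0)
            = ∑ p ∈ Finset.HasAntidiagonal.antidiagonal n,
              (if 0 < p.1 ∧ p.1 < p.2 then
                (n.choose p.1 : K) * coeff (R := K) p.1 B * coeff (R := K) p.2 B else 0) := by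
          apply Finset.sum_congr rfl
          intro p hp
          by_cases hc : 0 < p.1 ∧ p.1 < p.2
          · obtain ⟨l1, l2⟩ := mem_lt_of_cross hp hc.1 hc.2
            rw [if_pos hc, if_pos hc, ih _ l1, ih _ l2]
          · rw [if_neg hc, if_neg hc]
        rw [hsq, hsum] at h1
        exact add_right_cancel (h1.symm.trans h2)
  · -- surjective
    intro C hC
    simp only [Set.mem_setOf_eq] at hC
    set c : ℕ → K := fun m => coeff (R := K) m C with hc
    refine ⟨PowerSeries.mk (sol c), ?_, ?_⟩
    · simp only [Set.mem_setOf_eq, coeff_mk]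
      exact sol_zero c
    · refine PowerSeries.ext fun n => ?_
      rcases Nat.eq_zero_or_pos n with hn | hn
      · rw [hn, coeff_zero_sigmaForm]
        simp only [coeff_mk, sol_zero, one_pow]
        exact hC.symm
      · have h0 : coeff (R := K) 0 (PowerSeries.mk (sol c)) = 1 := by
          simp only [coeff_mk]; exact sol_zero c
        rw [coeff_sigmaForm_pos _ h0 n hn]
        have hs := sol_eq' c n
        rw [solF, if_neg hn.ne'] at hs
        simp only [coeff_mk]
        rw [hs]
        show _ = c n
        ring
end

section
/- Over F₂, the quadratic map σ̃ defined by σ̃(Σ αₙXⁿ) = Σ_{0≤i≤j} C(i+j,i) αᵢαⱼ X^{i+j} sends the rational series 1/(1+X) = Σₙ Xⁿ to 1 + Σ_{n≥0} X^{2ⁿ}, and the latter series y = 1 + u, where u = Σ_{n≥0} X^{2ⁿ}, satisfies y + y² + X = 0, i.e. (1+u) + (1+u)² = X. -/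
open PowerSeries
open scoped Classical


-- doubling a power of two
lemma pw_double {n : ℕ} (hn : 1 ≤ n) : (∃ k, 2 * n = 2 ^ k) ↔ ∃ k, n = 2 ^ k := by
  constructor
  · rintro ⟨k, hk⟩
    cases k with
    | zero => omega
    | succ j => exact ⟨j, by rw [pow_succ, mul_comm] at hk; omega⟩
  · rintro ⟨k, rfl⟩
    exact ⟨k + 1, by rw [pow_succ, mul_comm]⟩

lemma odd_not_pw {m : ℕ} (h1 : m % 2 = 1) (h2 : m ≠ 1) : ¬∃ k : ℕ, m = 2 ^ k := by
  rintro ⟨k, rfl⟩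
  cases k with
  | zero => omega
  | succ j => rw [pow_succ, Nat.mul_mod_left] at h1; omega

lemma central_eq {n : ℕ} (hn : 1 ≤ n) :
    (2 * n).choose n = 2 * (2 * n - 1).choose (n - 1) := by
  obtain ⟨t, rfl⟩ : ∃ t, n = t + 1 := ⟨n - 1, by omega⟩
  have h1 : 2 * (t + 1) = (2 * t + 1) + 1 := by omega
  rw [h1, Nat.choose_succ_succ]
  have h2 : (2 * t + 1).choose (t + 1) = (2 * t + 1).choose t := by
    have := Nat.choose_symm (n := 2 * t + 1) (k := t + 1) (by omega)
    simpa [show 2 * t + 1 - (t + 1) = t by omega] using this.symm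
  simp [h2]
  omega

lemma lucas_step (n k : ℕ) :
    n.choose k % 2 = (n % 2).choose (k % 2) * (n / 2).choose (k / 2) % 2 :=
  Choose.choose_modEq_choose_mod_mul_choose_div_nat (p := 2)

lemma central_parity : ∀ n : ℕ, 1 ≤ n →
    ((2 * n - 1).choose (n - 1) % 2 = 1 ↔ ∃ k : ℕ, n = 2 ^ k) := by
  intro n
  induction n using Nat.strong_induction_on with
  | _ n IH =>
    intro hn
    rcases Nat.lt_or_ge n 2 with h2 | h2
    · interval_cases n
      exact ⟨fun _ => ⟨0, by norm_num⟩, fun _ => by decide⟩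
    rcases Nat.even_or_odd n with ⟨t, rfl⟩ | ⟨t, rfl⟩
    · -- n = t + t, t ≥ 1
      have ht : 1 ≤ t := by omega
      have hs := lucas_step (2 * (t + t) - 1) (t + t - 1)
      have e1 : (2 * (t + t) - 1) % 2 = 1 := by omega
      have e2 : (t + t - 1) % 2 = 1 := by omega
      have e3 : (2 * (t + t) - 1) / 2 = 2 * t - 1 := by omega
      have e4 : (t + t - 1) / 2 = t - 1 := by omega
      rw [e1, e2, e3, e4, Nat.choose_self, one_mul] at hs
      rw [hs, IH t (by omega) ht]
      have := pw_double (n := t) ht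
      rw [show 2 * t = t + t by omega] at this
      exact this.symm
    · -- n = 2t + 1, t ≥ 1
      have ht : 1 ≤ t := by omega
      have hs := lucas_step (2 * (2 * t + 1) - 1) (2 * t + 1 - 1)
      have e1 : (2 * (2 * t + 1) - 1) % 2 = 1 := by omega
      have e2 : (2 * t + 1 - 1) % 2 = 0 := by omega
      have e3 : (2 * (2 * t + 1) - 1) / 2 = 2 * t := by omega
      have e4 : (2 * t + 1 - 1) / 2 = t := by omega
      rw [e1, e2, e3, e4, Nat.choose_zero_right, one_mul] at hs
      rw [hs, central_eq ht, Nat.mul_mod_right]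
      simp only [zero_ne_one, false_iff]
      exact odd_not_pw (by omega) (by omega)

lemma halfsum_even (n : ℕ) :
    2 * ∑ i ∈ Finset.range (n + 1), (2 * n).choose i = 2 ^ (2 * n) + (2 * n).choose n := by
  have hT : ∑ i ∈ Finset.range (2 * n + 1), (2 * n).choose i = 2 ^ (2 * n) :=
    Nat.sum_range_choose (2 * n)
  have hsplit : (∑ i ∈ Finset.range (n + 1), (2 * n).choose i)
      + ∑ i ∈ Finset.Ico (n + 1) (2 * n + 1), (2 * n).choose i
      = ∑ i ∈ Finset.range (2 * n + 1), (2 * n).choose i :=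
    Finset.sum_range_add_sum_Ico _ (by omega)
  have hrefl : ∑ i ∈ Finset.Ico (n + 1) (2 * n + 1), (2 * n).choose i
      = ∑ j ∈ Finset.range n, (2 * n).choose j := by
    refine Finset.sum_nbij' (fun i => 2 * n - i) (fun j => 2 * n - j) ?_ ?_ ?_ ?_ ?_
    · intro a ha; simp only [Finset.mem_Ico] at ha; simp only [Finset.mem_range]; omega
    · intro a ha; simp only [Finset.mem_range] at ha; simp only [Finset.mem_Ico]; omega
    · intro a ha; simp only [Finset.mem_Ico] at ha; omega
    · intro a ha; simp only [Finset.mem_range] at ha; omega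
    · intro a ha; simp only [Finset.mem_Ico] at ha
      exact (Nat.choose_symm (by omega)).symm
  have hsucc := Finset.sum_range_succ (fun i => (2 * n).choose i) n
  omega

lemma halfsum_parity (n : ℕ) (hn : 1 ≤ n) :
    ∑ i ∈ Finset.range (n + 1), (2 * n).choose i
      = 2 ^ (2 * n - 1) + (2 * n - 1).choose (n - 1) := by
  have h1 := halfsum_even n
  have h2 := central_eq hn
  have h3 : 2 ^ (2 * n) = 2 * 2 ^ (2 * n - 1) := by
    rw [← pow_succ']
    congr 1
    omega
  omega

lemma coeff1 (m : ℕ) :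
    ((∑ i ∈ Finset.range (m / 2 + 1), m.choose i : ℕ) : ZMod 2)
      = (if m = 0 then 1 else 0) + (if ∃ k : ℕ, m = 2 ^ k then 1 else 0) := by
  rcases Nat.eq_zero_or_pos m with rfl | hm
  · have : ¬∃ k : ℕ, 0 = 2 ^ k := by rintro ⟨k, hk⟩; exact (pow_ne_zero k two_ne_zero) hk.symm
    simp [this]
  rcases Nat.even_or_odd m with ⟨n, rfl⟩ | ⟨t, rfl⟩
  · -- even, n ≥ 1
    have hn : 1 ≤ n := by omega
    have h2 : (n + n) / 2 = n := by omega
    rw [h2, show n + n = 2 * n by omega, halfsum_parity n hn]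
    push_cast
    have hz : ((2 : ZMod 2)) = 0 := by decide
    rw [hz, zero_pow (by omega)]
    have hiff : (∃ k : ℕ, 2 * n = 2 ^ k) ↔ ∃ k : ℕ, n = 2 ^ k := pw_double hn
    have hcp := central_parity n hn
    have hcast : (((2 * n - 1).choose (n - 1) : ℕ) : ZMod 2)
        = (((2 * n - 1).choose (n - 1) % 2 : ℕ) : ZMod 2) := (ZMod.natCast_mod _ _).symm
    rw [zero_add, if_neg (by omega), zero_add, hcast]
    by_cases hP : ∃ k : ℕ, n = 2 ^ k
    · rw [if_pos (hiff.mpr hP), (hcp.mpr hP)]; norm_num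
    · rw [if_neg (fun h => hP (hiff.mp h))]
      have : (2 * n - 1).choose (n - 1) % 2 = 0 := by
        have h1 := hcp.not.mpr hP
        omega
      rw [this]; norm_num
  · -- odd
    have h2 : (2 * t + 1) / 2 = t := by omega
    rw [h2, Nat.sum_range_choose_halfway t]
    rcases Nat.eq_zero_or_pos t with rfl | ht
    · norm_num
      exact ⟨0, rfl⟩
    · have hnp : ¬∃ k : ℕ, 2 * t + 1 = 2 ^ k := odd_not_pw (by omega) (by omega)
      rw [if_neg (by omega), if_neg hnp]
      push_cast
      have : ((4 : ZMod 2)) = 0 := by decide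
      rw [this, zero_pow (by omega)]
      norm_num

/-- The quadratic map `σ̃(Σ αₙXⁿ) = Σ_{0≤i≤j} C(i+j,i) αᵢαⱼ X^{i+j}`. -/
noncomputable def sigmaTilde {K : Type*} [Field K] (A : PowerSeries K) : PowerSeries K :=
  PowerSeries.mk fun m =>
    ∑ p ∈ Finset.HasAntidiagonal.antidiagonal m,
      (if p.1 ≤ p.2 then
        (m.choose p.1 : K) * PowerSeries.coeff (R := K) p.1 A * PowerSeries.coeff (R := K) p.2 A
      else 0)

/-- Over `𝔽₂`, `σ̃` sends `1/(1+X) = Σₙ Xⁿ` to `1 + Σ_{n≥0} X^{2ⁿ}`, and the series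
`u = Σ_{n≥0} X^{2ⁿ}` satisfies `u + u² = X`. -/
theorem sigmaTilde_geometric :
    sigmaTilde (PowerSeries.mk fun _ => (1 : ZMod 2)) =
      1 + (PowerSeries.mk fun n => if ∃ k : ℕ, n = 2 ^ k then (1 : ZMod 2) else 0) ∧
    (PowerSeries.mk fun n => if ∃ k : ℕ, n = 2 ^ k then (1 : ZMod 2) else 0) +
      (PowerSeries.mk fun n => if ∃ k : ℕ, n = 2 ^ k then (1 : ZMod 2) else 0) ^ 2 =
      PowerSeries.X := by
  constructor
  · ext m
    rw [sigmaTilde]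
    simp only [coeff_mk, map_add, PowerSeries.coeff_one, mul_one]
    rw [Finset.Nat.sum_antidiagonal_eq_sum_range_succ_mk]
    simp only [coeff_mk, mul_one]
    rw [← Finset.sum_filter]
    have hfil : (Finset.range (m + 1)).filter (fun i => i ≤ m - i) = Finset.range (m / 2 + 1) := by
      ext i
      simp only [Finset.mem_filter, Finset.mem_range]
      omega
    rw [hfil, ← Nat.cast_sum]
    exact coeff1 m
  ·
    set a : ℕ → ZMod 2 := fun n => if ∃ k : ℕ, n = 2 ^ k then (1 : ZMod 2) else 0 with ha
    ext m
    rw [map_add, sq, PowerSeries.coeff_mul, Finset.Nat.sum_antidiagonal_eq_sum_range_succ_mk]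
    simp only [coeff_mk, PowerSeries.coeff_X]
    rw [← Finset.sum_filter_add_sum_filter_not (Finset.range (m + 1)) (fun i => 2 * i = m)]
    have hz : ∑ i ∈ (Finset.range (m + 1)).filter (fun i => ¬(2 * i = m)), a i * a (m - i) = 0 := by
      refine Finset.sum_involution (fun i _ => m - i) ?_ ?_ ?_ ?_
      · intro i hi
        simp only [Finset.mem_filter, Finset.mem_range] at hi
        rw [show m - (m - i) = i by omega]
        rw [mul_comm]
        exact CharTwo.add_self_eq_zero _
      · intro i hi _
        simp only [Finset.mem_filter, Finset.mem_range] at hi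
        omega
      · intro i hi
        simp only [Finset.mem_filter, Finset.mem_range] at hi ⊢
        omega
      · intro i hi
        simp only [Finset.mem_filter, Finset.mem_range] at hi
        omega
    rw [hz, add_zero]
    rcases Nat.even_or_odd m with ⟨n, rfl⟩ | ⟨t, rfl⟩
    · -- even
      have hfil : (Finset.range (n + n + 1)).filter (fun i => 2 * i = n + n) = {n} := by
        ext i
        simp only [Finset.mem_filter, Finset.mem_range, Finset.mem_singleton]
        omega
      rw [hfil, Finset.sum_singleton, show n + n - n = n by omega]
      rcases Nat.eq_zero_or_pos n with rfl | hn
      · have h0 : ¬∃ k : ℕ, 0 = 2 ^ k := by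
          rintro ⟨k, hk⟩; exact (pow_ne_zero k two_ne_zero) hk.symm
        simp [ha, h0]
      · have hiff : (∃ k : ℕ, n + n = 2 ^ k) ↔ ∃ k : ℕ, n = 2 ^ k := by
          rw [show n + n = 2 * n by omega]
          exact pw_double hn
        have ham : a (n + n) = a n := by
          simp only [ha]
          by_cases hP : ∃ k : ℕ, n = 2 ^ k
          · rw [if_pos (hiff.mpr hP), if_pos hP]
          · rw [if_neg (fun h => hP (hiff.mp h)), if_neg hP]
        rw [ham, if_neg (by omega)]
        have : a n * a n = a n := by
          simp only [ha]
          split_ifs <;> norm_num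
        rw [this]
        exact CharTwo.add_self_eq_zero _
    · -- odd
      have hfil : (Finset.range (2 * t + 1 + 1)).filter (fun i => 2 * i = 2 * t + 1)
          = (∅ : Finset ℕ) := by
        ext i
        simp only [Finset.mem_filter, Finset.mem_range, Finset.notMem_empty, iff_false]
        omega
      rw [hfil, Finset.sum_empty, add_zero]
      rcases Nat.eq_zero_or_pos t with rfl | ht
      · simp only [ha]
        rw [if_pos ⟨0, by norm_num⟩, if_pos (by norm_num)]
      · have hnp : ¬∃ k : ℕ, 2 * t + 1 = 2 ^ k := odd_not_pw (by omega) (by omega)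
        simp only [ha]
        rw [if_neg hnp, if_neg (by omega)]
end

section
/- For non-commutative formal power series A, B in K⟨⟨X₁,...,X_k⟩⟩, the recursive closure of the shuffle product satisfies closure(A ⧢ B) ⊆ span{Y ⧢ Z : Y ∈ closure(A), Z ∈ closure(B)}; consequently dim(closure(A ⧢ B)) ≤ dim(closure(A))·dim(closure(B)), and the shuffle product of two rational series is rational. -/
/-- A non-commutative formal power series in `k` variables over `K`: a coefficient
function on words (monomials) in the free monoid on `k` letters. -/
def NCSeries (k : ℕ) (K : Type*) := List (Fin k) → K

instance (k : ℕ) (K : Type*) [Field K] : AddCommGroup (NCSeries k K) :=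
  Pi.addCommGroup

noncomputable instance (k : ℕ) (K : Type*) [Field K] : Module K (NCSeries k K) :=
  Pi.module _ _ _

/-- The shuffle product of two non-commutative series: the coefficient on a word `W`
is the sum, over all ways of colouring the letters of `W` with two colours, of the
product of the coefficient of `A` on the first-colour subword with the coefficient of
`B` on the second-colour subword. -/
noncomputable def ncShuffle {k : ℕ} {K : Type*} [Field K] (A B : NCSeries k K) :
    NCSeries k K := fun W =>
  ∑ S : Finset (Fin W.length),
    A (((List.finRange W.length).filter (fun i => i ∈ S)).map W.get) *
    B (((List.finRange W.length).filter (fun i => i ∉ S)).map W.get)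

/-- `ρ(T)A`: the series with coefficients `(ρ(T)A, W) = (A, WT)`. -/
def ncRho {k : ℕ} {K : Type*} [Field K] (T : List (Fin k)) (A : NCSeries k K) :
    NCSeries k K := fun W => A (W ++ T)

/-- The recursive closure of `A`: the span of the `ρ(T)A`, i.e. the row span of the
Hankel matrix of `A`.  `A` is rational iff this space is finite-dimensional
(Schützenberger). -/
noncomputable def ncClosure {k : ℕ} {K : Type*} [Field K] (A : NCSeries k K) :
    Submodule K (NCSeries k K) :=
  Submodule.span K (Set.range fun T : List (Fin k) => ncRho T A)

section helpers
lemma finRange_succ' (n : ℕ) :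
    List.finRange (n+1) = (List.finRange n).map Fin.castSucc ++ [Fin.last n] := by
  apply (List.map_injective_iff.mpr (Fin.val_injective))
  simp [List.map_append, List.range_succ, Function.comp_def]

lemma finRange_cast {a b : ℕ} (h : a = b) :
    List.finRange b = (List.finRange a).map (Fin.cast h) := by
  subst h; simp

lemma get_concat_lt {k : ℕ} (W : List (Fin k)) (x : Fin k)
    (h : (W ++ [x]).length = W.length + 1) (i : Fin W.length) :
    (W ++ [x]).get (Fin.cast h.symm i.castSucc) = W.get i := by
  simp [List.get_eq_getElem, List.getElem_append]

lemma get_concat_last {k : ℕ} (W : List (Fin k)) (x : Fin k)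
    (h : (W ++ [x]).length = W.length + 1) :
    (W ++ [x]).get (Fin.cast h.symm (Fin.last W.length)) = x := by
  simp [List.get_eq_getElem]

lemma subword_concat {k : ℕ} (W : List (Fin k)) (x : Fin k)
    (h : (W ++ [x]).length = W.length + 1)
    (p : Fin (W ++ [x]).length → Bool) :
    ((List.finRange (W ++ [x]).length).filter p).map (W ++ [x]).get
      = ((List.finRange W.length).filter
            (fun i => p (Fin.cast h.symm i.castSucc))).map W.get
        ++ (if p (Fin.cast h.symm (Fin.last W.length)) then [x] else []) := by
  rw [finRange_cast h.symm, finRange_succ', List.map_append, List.map_map,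
      List.filter_append, List.filter_map, List.filter_map,
      List.map_append, List.map_map, List.map_map]
  congr 1
  · exact List.map_congr_left fun i _ => get_concat_lt W x h i
  · by_cases hp : p (Fin.cast h.symm (Fin.last W.length)) <;>
      simp [hp, get_concat_last W x h]

lemma powerset_map' {α β : Type*} (f : α ↪ β) (s : Finset α) :
    (s.map f).powerset
      = s.powerset.map ⟨Finset.map f, Finset.map_injective f⟩ := by
  ext t
  simp [Finset.mem_powerset, Finset.subset_map_iff, eq_comm]
end helpers

section leibniz
variable {k : ℕ} {K : Type*} [Field K]

lemma ncRho_single_shuffle (x : Fin k) (A B : NCSeries k K) :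
    ncRho [x] (ncShuffle A B)
      = ncShuffle (ncRho [x] A) B + ncShuffle A (ncRho [x] B) := by
  funext W
  have h : (W ++ [x]).length = W.length + 1 := by simp
  set emb : Fin W.length ↪ Fin (W ++ [x]).length :=
    ⟨fun i => Fin.cast h.symm i.castSucc, fun a b hab => by
      apply Fin.ext
      simpa using congrArg Fin.val hab⟩ with hemb
  have hmemlast : ∀ S : Finset (Fin W.length),
      Fin.cast h.symm (Fin.last W.length) ∉ S.map emb := fun S hS => by
    rcases Finset.mem_map.mp hS with ⟨i, -, hi⟩
    have := congrArg Fin.val hi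
    simp [hemb] at this
    exact absurd this (Nat.ne_of_lt i.isLt)
  have hembne : ∀ (i : Fin W.length) (S : Finset (Fin W.length)),
      (emb i ∈ insert (Fin.cast h.symm (Fin.last W.length)) (S.map emb)) ↔ i ∈ S := by
    intro i S
    rw [Finset.mem_insert]
    constructor
    · rintro (hi | hi)
      · exfalso
        have := congrArg Fin.val hi
        simp [hemb] at this
        exact absurd this (Nat.ne_of_lt i.isLt)
      · exact (Finset.mem_map' emb).mp hi
    · intro hi; exact Or.inr ((Finset.mem_map' emb).mpr hi)
  have huniv : (Finset.univ : Finset (Fin (W ++ [x]).length))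
      = insert (Fin.cast h.symm (Fin.last W.length))
          ((Finset.univ : Finset (Fin W.length)).map emb) := by
    ext j
    simp only [Finset.mem_univ, true_iff, Finset.mem_insert, Finset.mem_map]
    have hj : (j : ℕ) < W.length + 1 := by
      have := j.isLt; omega
    rcases Nat.lt_succ_iff_lt_or_eq.mp hj with hj' | hj'
    · exact Or.inr ⟨⟨j.val, hj'⟩, trivial, Fin.ext (by rw [hemb]; rfl)⟩
    · exact Or.inl (Fin.ext (by simp [hj']))
  have key1 : ∀ S : Finset (Fin W.length),
      A (((List.finRange (W ++ [x]).length).filter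
            (fun i => i ∈ S.map emb)).map (W ++ [x]).get) *
      B (((List.finRange (W ++ [x]).length).filter
            (fun i => i ∉ S.map emb)).map (W ++ [x]).get)
      = A (((List.finRange W.length).filter (fun i => i ∈ S)).map W.get) *
        ncRho [x] B (((List.finRange W.length).filter (fun i => i ∉ S)).map W.get) := by
    intro S
    rw [subword_concat W x h, subword_concat W x h]
    have e1 : (fun i : Fin W.length =>
        decide ((Fin.cast h.symm i.castSucc) ∈ S.map emb)) = fun i => decide (i ∈ S) :=
      funext fun i => decide_eq_decide.mpr (Finset.mem_map' emb)
    have e2 : (fun i : Fin W.length =>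
        decide ((Fin.cast h.symm i.castSucc) ∉ S.map emb)) = fun i => decide (i ∉ S) :=
      funext fun i => decide_eq_decide.mpr (not_congr (Finset.mem_map' emb))
    have c1 : (decide ((Fin.cast h.symm (Fin.last W.length)) ∈ S.map emb)) = false :=
      decide_eq_false (hmemlast S)
    have c2 : (decide ((Fin.cast h.symm (Fin.last W.length)) ∉ S.map emb)) = true :=
      decide_eq_true (hmemlast S)
    rw [e1, e2, c1, c2]
    simp [ncRho]
  have key2 : ∀ S : Finset (Fin W.length),
      A (((List.finRange (W ++ [x]).length).filter
            (fun i => i ∈ insert (Fin.cast h.symm (Fin.last W.length)) (S.map emb))).map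
              (W ++ [x]).get) *
      B (((List.finRange (W ++ [x]).length).filter
            (fun i => i ∉ insert (Fin.cast h.symm (Fin.last W.length)) (S.map emb))).map
              (W ++ [x]).get)
      = ncRho [x] A (((List.finRange W.length).filter (fun i => i ∈ S)).map W.get) *
        B (((List.finRange W.length).filter (fun i => i ∉ S)).map W.get) := by
    intro S
    rw [subword_concat W x h, subword_concat W x h]
    have e1 : (fun i : Fin W.length =>
        decide ((Fin.cast h.symm i.castSucc) ∈
          insert (Fin.cast h.symm (Fin.last W.length)) (S.map emb)))
        = fun i => decide (i ∈ S) :=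
      funext fun i => decide_eq_decide.mpr (hembne i S)
    have e2 : (fun i : Fin W.length =>
        decide ((Fin.cast h.symm i.castSucc) ∉
          insert (Fin.cast h.symm (Fin.last W.length)) (S.map emb)))
        = fun i => decide (i ∉ S) :=
      funext fun i => decide_eq_decide.mpr (not_congr (hembne i S))
    have c1 : (decide ((Fin.cast h.symm (Fin.last W.length)) ∈
        insert (Fin.cast h.symm (Fin.last W.length)) (S.map emb))) = true :=
      decide_eq_true (Finset.mem_insert_self _ _)
    have c2 : (decide ((Fin.cast h.symm (Fin.last W.length)) ∉
        insert (Fin.cast h.symm (Fin.last W.length)) (S.map emb))) = false := by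
      simp
    rw [e1, e2, c1, c2]
    simp [ncRho]
  show ncShuffle A B (W ++ [x]) = ncShuffle (ncRho [x] A) B W + ncShuffle A (ncRho [x] B) W
  rw [ncShuffle, ncShuffle, ncShuffle]
  rw [← Finset.powerset_univ, huniv, Finset.sum_powerset_insert (hmemlast _)]
  simp only [powerset_map', Finset.sum_map, Finset.powerset_univ,
    Function.Embedding.coeFn_mk]
  rw [add_comm]
  congr 1
  · exact Finset.sum_congr rfl fun S _ => key2 S
  · exact Finset.sum_congr rfl fun S _ => key1 S

end leibniz

section main
variable {k : ℕ} {K : Type*} [Field K]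

lemma ncAdd_apply (A B : NCSeries k K) (W : List (Fin k)) : (A + B) W = A W + B W := rfl
lemma ncSmul_apply (c : K) (A : NCSeries k K) (W : List (Fin k)) : (c • A) W = c * A W := rfl

noncomputable def ncShuffleL : NCSeries k K →ₗ[K] NCSeries k K →ₗ[K] NCSeries k K where
  toFun A :=
    { toFun := fun B => ncShuffle A B
      map_add' := fun B C => funext fun W => by
        show ncShuffle A (B + C) W = (ncShuffle A B + ncShuffle A C) W
        rw [ncAdd_apply]
        simp only [ncShuffle, ncAdd_apply, ← Finset.sum_add_distrib]
        exact Finset.sum_congr rfl fun S _ => by ring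
      map_smul' := fun c B => funext fun W => by
        show ncShuffle A (c • B) W = (c • ncShuffle A B) W
        rw [ncSmul_apply]
        simp only [ncShuffle, ncSmul_apply, Finset.mul_sum]
        exact Finset.sum_congr rfl fun S _ => by ring }
  map_add' A A' := LinearMap.ext fun B => funext fun W => by
    show ncShuffle (A + A') B W = (ncShuffle A B + ncShuffle A' B) W
    rw [ncAdd_apply]
    simp only [ncShuffle, ncAdd_apply, ← Finset.sum_add_distrib]
    exact Finset.sum_congr rfl fun S _ => by ring
  map_smul' c A := LinearMap.ext fun B => funext fun W => by
    show ncShuffle (c • A) B W = (c • ncShuffle A B) W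
    rw [ncSmul_apply]
    simp only [ncShuffle, ncSmul_apply, Finset.mul_sum]
    exact Finset.sum_congr rfl fun S _ => by ring

lemma ncShuffleL_apply (A B : NCSeries k K) : ncShuffleL A B = ncShuffle A B := rfl

noncomputable def ncRhoL (T : List (Fin k)) : NCSeries k K →ₗ[K] NCSeries k K where
  toFun := ncRho T
  map_add' _ _ := rfl
  map_smul' _ _ := rfl

lemma ncRho_nil (A : NCSeries k K) : ncRho [] A = A := funext fun W => by simp [ncRho]

lemma ncRho_cons (x : Fin k) (T : List (Fin k)) (A : NCSeries k K) :
    ncRho (x :: T) A = ncRho [x] (ncRho T A) := funext fun W => by simp [ncRho]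

lemma mem_ncClosure_self (A : NCSeries k K) : A ∈ ncClosure A :=
  Submodule.subset_span ⟨[], ncRho_nil A⟩

lemma ncRho_mem_ncClosure (x : Fin k) {A Y : NCSeries k K} (hY : Y ∈ ncClosure A) :
    ncRho [x] Y ∈ ncClosure A := by
  have h1 : ncRhoL (K := K) [x] Y ∈ Submodule.map (ncRhoL [x]) (ncClosure A) :=
    Submodule.mem_map_of_mem hY
  rw [ncClosure, Submodule.map_span] at h1
  refine Submodule.span_le.mpr ?_ h1
  rintro _ ⟨_, ⟨T, rfl⟩, rfl⟩
  show ncRho [x] (ncRho T A) ∈ ncClosure A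
  rw [← ncRho_cons]
  exact Submodule.subset_span ⟨x :: T, rfl⟩

theorem ncClosure_shuffle' {k : ℕ} {K : Type*} [Field K] (A B : NCSeries k K) :
    ncClosure (ncShuffle A B) ≤
      Submodule.span K
        {C : NCSeries k K | ∃ Y ∈ ncClosure A, ∃ Z ∈ ncClosure B, C = ncShuffle Y Z} ∧
    (FiniteDimensional K (ncClosure A) → FiniteDimensional K (ncClosure B) →
      FiniteDimensional K (ncClosure (ncShuffle A B)) ∧
      Module.finrank K (ncClosure (ncShuffle A B)) ≤
        Module.finrank K (ncClosure A) * Module.finrank K (ncClosure B)) := by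
  classical
  set M := Submodule.span K
      {C : NCSeries k K | ∃ Y ∈ ncClosure A, ∃ Z ∈ ncClosure B, C = ncShuffle Y Z} with hM
  have hgen : ∀ T : List (Fin k), ncRho T (ncShuffle A B) ∈ M := by
    intro T
    induction T with
    | nil =>
      rw [ncRho_nil]
      exact Submodule.subset_span ⟨A, mem_ncClosure_self A, B, mem_ncClosure_self B, rfl⟩
    | cons x T ih =>
      rw [ncRho_cons]
      have h1 : ncRhoL (K := K) [x] (ncRho T (ncShuffle A B))
          ∈ Submodule.map (ncRhoL [x]) M := Submodule.mem_map_of_mem ih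
      rw [hM, Submodule.map_span] at h1
      refine Submodule.span_le.mpr ?_ h1
      rintro _ ⟨_, ⟨Y, hY, Z, hZ, rfl⟩, rfl⟩
      show ncRho [x] (ncShuffle Y Z) ∈ M
      rw [ncRho_single_shuffle]
      exact add_mem
        (Submodule.subset_span ⟨_, ncRho_mem_ncClosure x hY, _, hZ, rfl⟩)
        (Submodule.subset_span ⟨_, hY, _, ncRho_mem_ncClosure x hZ, rfl⟩)
  have part1 : ncClosure (ncShuffle A B) ≤ M :=
    Submodule.span_le.mpr (by rintro _ ⟨T, rfl⟩; exact hgen T)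
  refine ⟨part1, fun hA hB => ?_⟩
  have hset : {C : NCSeries k K | ∃ Y ∈ ncClosure A, ∃ Z ∈ ncClosure B, C = ncShuffle Y Z}
      = Set.image2 (fun Y Z : NCSeries k K => ncShuffleL Y Z)
          (ncClosure A : Set (NCSeries k K)) (ncClosure B) := by
    ext C
    simp only [Set.mem_setOf_eq, Set.mem_image2, SetLike.mem_coe, ncShuffleL_apply, eq_comm]
  let bA := Module.finBasis K (ncClosure A)
  let bB := Module.finBasis K (ncClosure B)
  let sA : Finset (NCSeries k K) := Finset.univ.image fun i => (bA i : NCSeries k K)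
  let sB : Finset (NCSeries k K) := Finset.univ.image fun i => (bB i : NCSeries k K)
  have hsA : Submodule.span K (sA : Set (NCSeries k K)) = ncClosure A := by
    have h2 : (sA : Set (NCSeries k K))
        = (ncClosure A).subtype '' Set.range bA := by
      simp only [sA, Finset.coe_image, Finset.coe_univ, Set.image_univ, ← Set.range_comp]
      rfl
    rw [h2, Submodule.span_image, bA.span_eq, Submodule.map_subtype_top]
  have hsB : Submodule.span K (sB : Set (NCSeries k K)) = ncClosure B := by
    have h2 : (sB : Set (NCSeries k K))
        = (ncClosure B).subtype '' Set.range bB := by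
      simp only [sB, Finset.coe_image, Finset.coe_univ, Set.image_univ, ← Set.range_comp]
      rfl
    rw [h2, Submodule.span_image, bB.span_eq, Submodule.map_subtype_top]
  let F : Finset (NCSeries k K) :=
    Finset.image₂ (fun Y Z : NCSeries k K => ncShuffleL Y Z) sA sB
  have hMF : M = Submodule.span K (F : Set (NCSeries k K)) := by
    rw [hM, hset, ← Submodule.map₂_eq_span_image2, ← hsA, ← hsB,
      Submodule.map₂_span_span, Finset.coe_image₂]
  have hFD : FiniteDimensional K (Submodule.span K (F : Set (NCSeries k K))) :=
    FiniteDimensional.span_finset K F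
  have hle : ncClosure (ncShuffle A B) ≤ Submodule.span K (F : Set (NCSeries k K)) := by
    rw [← hMF]; exact part1
  constructor
  · exact Submodule.finiteDimensional_of_le hle
  · calc Module.finrank K (ncClosure (ncShuffle A B))
        ≤ Module.finrank K (Submodule.span K (F : Set (NCSeries k K))) :=
          Submodule.finrank_mono hle
      _ ≤ F.card := finrank_span_finset_le_card F
      _ ≤ sA.card * sB.card := Finset.card_image₂_le _ _ _
      _ ≤ Module.finrank K (ncClosure A) * Module.finrank K (ncClosure B) := by
          apply Nat.mul_le_mul
          · exact (Finset.card_image_le).trans (by simp [Finset.card_univ])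
          · exact (Finset.card_image_le).trans (by simp [Finset.card_univ])
end main

/-- The recursive closure of a shuffle product is contained in the span of shuffle
products of elements of the recursive closures; consequently the complexity of
`A ⧢ B` is at most the product of the complexities, and the shuffle product of two
rational series is rational. -/
theorem ncClosure_shuffle {k : ℕ} {K : Type*} [Field K] (A B : NCSeries k K) :
    ncClosure (ncShuffle A B) ≤
      Submodule.span K
        {C : NCSeries k K | ∃ Y ∈ ncClosure A, ∃ Z ∈ ncClosure B, C = ncShuffle Y Z} ∧
    (FiniteDimensional K (ncClosure A) → FiniteDimensional K (ncClosure B) →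
      FiniteDimensional K (ncClosure (ncShuffle A B)) ∧
      Module.finrank K (ncClosure (ncShuffle A B)) ≤
        Module.finrank K (ncClosure A) * Module.finrank K (ncClosure B)) := by
  exact ncClosure_shuffle' A B
end
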